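/- For the toroidal mesh C_m □ C_n (the Cartesian product of cycles, m, n ≥ 3), min-seed(C_m □ C_n, 3) ≥ ⌈(mn+1)/3⌉ and min-seed(C_m □ C_n, 3) ≤ min{⌈m/3⌉(n+1), ⌈n/3⌉(m+1)}. -/

import Mathlib

/-!
Lower bound: grow a percolating seed set `S` into the whole vertex set one vertex at a time,
always adding a vertex with at least `3` neighbours in the current set `A`. Each addition raises
`∑_{v ∈ A} #(N(v) ∩ A)` (twice the number of edges inside `A`) by at least `6`, and the last one,
all of whose `4` neighbours are already present, by `8`. Starting from at least `0` and ending at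
`4mn` gives `6 (mn - |S|) + 2 ≤ 4mn`, i.e. `3|S| ≥ mn + 1`.

Upper bound: seed the columns `j ≡ 0, 1, 2 (mod 3)` at the even rows, the odd rows and row `0`
respectively; a block of three consecutive columns costs `⌈m/2⌉ + ⌊m/2⌋ + 1 = m + 1`. The
columns `j ≡ 1` fill up first, then the columns `j ≡ 0`, and finally each column `j ≡ 2` fills
up from row `0` upwards. Swapping the two factors of the torus gives the other bound.
-/

inductive Activated {V : Type*} (G : SimpleGraph V) (θ : V → ℕ) (S : Set V) : V → Prop
  | base {v : V} : v ∈ S → Activated G θ S v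
  | step {v : V} (T : Finset V) (hadj : ∀ u ∈ T, G.Adj u v) (hcard : θ v ≤ T.card)
      (hact : ∀ u ∈ T, Activated G θ S u) : Activated G θ S v

noncomputable def minSeed {V : Type*} [Fintype V] (G : SimpleGraph V) (θ : V → ℕ) : ℕ :=
  sInf {k | ∃ S : Finset V, S.card = k ∧ ∀ v, Activated G θ (↑S) v}

def toroidalMesh (m n : ℕ) [NeZero m] [NeZero n] : SimpleGraph (ZMod m × ZMod n) :=
  SimpleGraph.fromRel (fun a b =>
    (b.1 = a.1 + 1 ∧ b.2 = a.2) ∨ (a.1 = b.1 ∧ b.2 = a.2 + 1))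

open Finset SimpleGraph

theorem ZMod.natCast_ne_zero_of_lt {m k : ℕ} (hk0 : 0 < k) (hk : k < m) : (k : ZMod m) ≠ 0 := by
  rw [Ne, ZMod.natCast_eq_zero_iff]
  exact Nat.not_dvd_of_pos_of_lt hk0 hk

theorem sum_range_mod_three_le (f : ℕ → ℕ) (n : ℕ) :
    ∑ j ∈ range n, f (j % 3) ≤ (n + 2) / 3 * (f 0 + f 1 + f 2) := by
  have hblocks (k : ℕ) : ∑ j ∈ range (3 * k), f (j % 3) = k * (f 0 + f 1 + f 2) := by
    induction k with
    | zero => simp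
    | succ k ih =>
      rw [show 3 * (k + 1) = 3 * k + 2 + 1 by ring, sum_range_succ, sum_range_succ,
        sum_range_succ, ih, show (3 * k + 2) % 3 = 2 by omega, show (3 * k + 1) % 3 = 1 by omega,
        show 3 * k % 3 = 0 by omega]
      ring
  calc ∑ j ∈ range n, f (j % 3)
      ≤ ∑ j ∈ range (3 * ((n + 2) / 3)), f (j % 3) :=
        sum_le_sum_of_subset (range_subset_range.2 (by omega))
    _ = (n + 2) / 3 * (f 0 + f 1 + f 2) := hblocks _

section Activation

variable {V V' : Type*} {G : SimpleGraph V} {G' : SimpleGraph V'}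

theorem Activated.map_iso (e : G ≃g G') {θ : V' → ℕ} {S : Set V} {v : V}
    (h : Activated G (θ ∘ e) S v) : Activated G' θ (e '' S) (e v) := by
  classical
  induction h with
  | base hv => exact .base (Set.mem_image_of_mem e hv)
  | step T hadj hcard _ ih =>
    refine .step (T.map e.toEquiv.toEmbedding) ?_ (by simpa using hcard) ?_ <;>
      simp only [forall_mem_map]
    · exact fun u hu => e.map_adj_iff.2 (hadj u hu)
    · exact ih

theorem Activated.of_forall_adj_ne [DecidableEq V] {θ : V → ℕ} {S : Set V} {v : V} (x : V)
    [Fintype (G.neighborSet v)] (hθ : θ v < G.degree v)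
    (h : ∀ u, G.Adj u v → u ≠ x → Activated G θ S u) : Activated G θ S v := by
  refine .step ((G.neighborFinset v).erase x) (fun u hu => ?_) ?_ (fun u hu => ?_)
  · exact ((G.mem_neighborFinset v u).1 (mem_of_mem_erase hu)).symm
  · have := pred_card_le_card_erase (s := G.neighborFinset v) (a := x)
    rw [card_neighborFinset_eq_degree] at this
    omega
  · rw [mem_erase, mem_neighborFinset] at hu
    exact h u hu.2.symm hu.1

theorem Activated.exists_threshold_le_of_notMem [DecidableRel G.Adj] {θ : V → ℕ}
    {S A : Finset V} {v : V} (hv : Activated G θ S v) (hSA : S ⊆ A) (hvA : v ∉ A) :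
    ∃ w ∉ A, θ w ≤ #{u ∈ A | G.Adj u w} := by
  induction hv with
  | base hv => exact absurd (hSA hv) hvA
  | @step v T hadj hcard _ ih =>
    by_cases hTA : ∀ u ∈ T, u ∈ A
    · exact ⟨v, hvA, hcard.trans (card_le_card fun u hu => mem_filter.2 ⟨hTA u hu, hadj u hu⟩)⟩
    · push Not at hTA
      obtain ⟨u, huT, huA⟩ := hTA
      exact ih u huT huA

variable [Fintype V]

theorem minSeed_le_card {θ : V → ℕ} (S : Finset V) (hS : ∀ v, Activated G θ S v) :
    minSeed G θ ≤ #S :=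
  Nat.sInf_le ⟨S, rfl, hS⟩

theorem le_minSeed {θ : V → ℕ} {k : ℕ}
    (h : ∀ S : Finset V, (∀ v, Activated G θ S v) → k ≤ #S) : k ≤ minSeed G θ := by
  refine le_csInf ⟨_, univ, rfl, fun v => .base (by simp)⟩ ?_
  rintro _ ⟨S, rfl, hS⟩
  exact h S hS

theorem minSeed_le_of_iso [Fintype V'] (e : G ≃g G') (θ : V' → ℕ) :
    minSeed G' θ ≤ minSeed G (θ ∘ e) := by
  obtain ⟨S, hcard, hS⟩ : minSeed G (θ ∘ e) ∈ _ :=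
    Nat.sInf_mem ⟨_, univ, rfl, fun v => .base (by simp)⟩
  rw [← hcard, ← card_map e.toEquiv.toEmbedding]
  refine minSeed_le_card _ fun v => ?_
  simpa [coe_map] using (hS (e.symm v)).map_iso e

theorem minSeed_eq_of_iso [Fintype V'] (e : G ≃g G') (r : ℕ) :
    minSeed G (fun _ => r) = minSeed G' (fun _ => r) :=
  le_antisymm (minSeed_le_of_iso e.symm _) (minSeed_le_of_iso e _)

end Activation

namespace SimpleGraph

variable {V : Type*} (G : SimpleGraph V) [DecidableRel G.Adj]

def internalDegreeSum (A : Finset V) : ℕ := ∑ v ∈ A, #{u ∈ A | G.Adj u v}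

theorem card_filter_adj_univ [Fintype V] (w : V) : #{u | G.Adj u w} = G.degree w := by
  simp_rw [← card_neighborFinset_eq_degree, neighborFinset_eq_filter, G.adj_comm]

theorem internalDegreeSum_univ [Fintype V] : G.internalDegreeSum univ = ∑ v, G.degree v := by
  simp only [internalDegreeSum, card_filter_adj_univ]

variable [DecidableEq V]

theorem card_filter_adj_insert_self (w : V) (A : Finset V) :
    #{u ∈ insert w A | G.Adj u w} = #{u ∈ A | G.Adj u w} := by
  rw [filter_insert, if_neg (G.irrefl (v := w))]

theorem internalDegreeSum_insert {w : V} {A : Finset V} (hw : w ∉ A) :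
    G.internalDegreeSum (insert w A) = G.internalDegreeSum A + 2 * #{u ∈ A | G.Adj u w} := by
  have hcol (v : V) (hv : v ∈ A) :
      #{u ∈ insert w A | G.Adj u v} = #{u ∈ A | G.Adj u v} + if G.Adj w v then 1 else 0 := by
    rw [filter_insert]
    split_ifs
    · exact card_insert_of_notMem fun h => hw (mem_filter.1 h).1
    · rfl
  rw [internalDegreeSum, sum_insert hw, card_filter_adj_insert_self, sum_congr rfl hcol,
    sum_add_distrib, sum_boole, internalDegreeSum]
  simp_rw [G.adj_comm w]
  simp only [Nat.cast_id]
  ring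

theorem two_mul_card_add_two_le_of_forall_activated [Fintype V] {r : ℕ}
    (hdeg : ∀ v, r < G.degree v) {S : Finset V} (hS : ∀ v, Activated G (fun _ => r) S v)
    (hSuniv : S ≠ univ) :
    2 * r * Fintype.card V + 2 ≤ ∑ v, G.degree v + 2 * r * #S := by
  classical
  set P : Finset V → Prop := fun A =>
    S ⊆ A ∧ A ≠ univ ∧ 2 * r * #A ≤ G.internalDegreeSum A + 2 * r * #S
  obtain ⟨A, hA, hmax⟩ := exists_max_image {A | P A} card ⟨S, by simpa [P] using hSuniv⟩
  obtain ⟨hSA, hAuniv, hAbound⟩ := (mem_filter.1 hA).2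
  obtain ⟨v, hvA⟩ := not_forall.1 fun h => hAuniv (eq_univ_iff_forall.2 h)
  obtain ⟨w, hwA, hw⟩ := (hS v).exists_threshold_le_of_notMem hSA hvA
  have hbound : 2 * r * #(insert w A) ≤ G.internalDegreeSum (insert w A) + 2 * r * #S := by
    rw [internalDegreeSum_insert G hwA, card_insert_of_notMem hwA]
    linarith
  have hwuniv : insert w A = univ := by
    by_contra hne
    have := hmax _ (mem_filter.2 ⟨mem_univ _, hSA.trans (subset_insert _ _), hne, hbound⟩)
    rw [card_insert_of_notMem hwA] at this
    omega
  have hdegw : #{u ∈ A | G.Adj u w} = G.degree w := by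
    rw [← card_filter_adj_insert_self, hwuniv, card_filter_adj_univ]
  have hcard : #A + 1 = Fintype.card V := by
    rw [← card_insert_of_notMem hwA, hwuniv, card_univ]
  rw [← internalDegreeSum_univ, ← hwuniv, internalDegreeSum_insert G hwA, hdegw, ← hcard]
  linarith [hdeg w]

theorem degree_circulantGraph_one {m : ℕ} (hm : 3 ≤ m) (a : ZMod m)
    [Fintype ((circulantGraph ({1} : Set (ZMod m))).neighborSet a)] :
    (circulantGraph ({1} : Set (ZMod m))).degree a = 2 := by
  classical
  have h1 : (1 : ZMod m) ≠ 0 := by exact_mod_cast ZMod.natCast_ne_zero_of_lt one_pos (by omega)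
  have h2 : (2 : ZMod m) ≠ 0 := by exact_mod_cast ZMod.natCast_ne_zero_of_lt two_pos (by omega)
  rw [← card_neighborFinset_eq_degree, card_eq_two]
  refine ⟨a + 1, a - 1, fun h => h2 (by linear_combination h), ?_⟩
  ext b
  simp only [mem_neighborFinset, circulantGraph_adj, Set.mem_singleton_iff, mem_insert,
    mem_singleton]
  constructor
  · rintro ⟨-, h | h⟩
    · right; linear_combination -h
    · left; linear_combination h
  · rintro (rfl | rfl)
    · exact ⟨fun h => h1 (by linear_combination -h), Or.inr (by ring)⟩
    · exact ⟨fun h => h1 (by linear_combination h), Or.inl (by ring)⟩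

end SimpleGraph

section ToroidalMesh

variable {m n : ℕ} [NeZero m] [NeZero n]

theorem toroidalMesh_eq_boxProd :
    toroidalMesh m n = circulantGraph {1} □ circulantGraph {1} := by
  ext u v
  simp only [toroidalMesh, fromRel_adj, boxProd_adj, circulantGraph_adj, Set.mem_singleton_iff,
    sub_eq_iff_eq_add]
  grind

theorem degree_toroidalMesh (hm : 3 ≤ m) (hn : 3 ≤ n) (v : ZMod m × ZMod n)
    [Fintype ((toroidalMesh m n).neighborSet v)] : (toroidalMesh m n).degree v = 4 := by
  classical
  generalize hG : toroidalMesh m n = G at *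
  rw [toroidalMesh_eq_boxProd] at hG
  subst hG
  rw [degree_boxProd, degree_circulantGraph_one hm, degree_circulantGraph_one hn]

theorem minSeed_toroidalMesh_comm (r : ℕ) :
    minSeed (toroidalMesh m n) (fun _ => r) = minSeed (toroidalMesh n m) (fun _ => r) := by
  rw [toroidalMesh_eq_boxProd, toroidalMesh_eq_boxProd]
  exact minSeed_eq_of_iso (boxProdComm _ _) r

theorem le_card_of_forall_activated_toroidalMesh (hm : 3 ≤ m) (hn : 3 ≤ n)
    {S : Finset (ZMod m × ZMod n)} (hS : ∀ v, Activated (toroidalMesh m n) (fun _ => 3) S v) :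
    (m * n + 3) / 3 ≤ #S := by
  classical
  have hcard : Fintype.card (ZMod m × ZMod n) = m * n := by simp
  by_cases hSuniv : S = univ
  · rw [hSuniv, card_univ, hcard]
    have : 9 ≤ m * n := Nat.mul_le_mul hm hn
    omega
  · have h := (toroidalMesh m n).two_mul_card_add_two_le_of_forall_activated (r := 3)
      (fun v => by rw [degree_toroidalMesh hm hn]; norm_num) hS hSuniv
    simp only [degree_toroidalMesh hm hn, sum_const, card_univ, hcard, smul_eq_mul] at h
    omega

end ToroidalMesh

section SeedSet

variable {m n : ℕ}

/-- Integer coordinates, so that the neighbours of `pt i j` are `pt (i ± 1) j` and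
`pt i (j ± 1)` with no wrap-around case split. -/
def pt (i j : ℤ) : ZMod m × ZMod n := (i, j)

theorem pt_natCast_left (j : ℤ) : (pt m j : ZMod m × ZMod n) = pt 0 j := by simp [pt]

theorem pt_natCast_right (i : ℤ) : (pt i n : ZMod m × ZMod n) = pt i 0 := by simp [pt]

theorem eq_pt_of_adj_pt [NeZero m] [NeZero n] {u : ZMod m × ZMod n} {i j : ℤ}
    (h : (toroidalMesh m n).Adj u (pt i j)) :
    u = pt (i + 1) j ∨ u = pt (i - 1) j ∨ u = pt i (j + 1) ∨ u = pt i (j - 1) := by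
  obtain ⟨-, (⟨h1, h2⟩ | ⟨h1, h2⟩) | (⟨h1, h2⟩ | ⟨h1, h2⟩)⟩ := fromRel_adj _ _ _ |>.1 h <;>
    simp only [pt, Prod.ext_iff, Int.cast_add, Int.cast_sub, Int.cast_one] at *
  · exact Or.inr (Or.inl ⟨by linear_combination -h1, h2.symm⟩)
  · exact Or.inr (Or.inr (Or.inr ⟨h1, by linear_combination -h2⟩))
  · exact Or.inl ⟨by linear_combination h1, h2⟩
  · exact Or.inr (Or.inr (Or.inl ⟨h1.symm, by linear_combination h2⟩))

abbrev IsSeed (i j : ℤ) : Prop :=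
  (j % 3 = 0 ∧ i % 2 = 0) ∨ (j % 3 = 1 ∧ i % 2 = 1) ∨ (j % 3 = 2 ∧ i = 0)

variable (m n) in
def seedSet : Finset (ZMod m × ZMod n) :=
  {p ∈ range m ×ˢ range n | IsSeed p.1 p.2}.image fun p => pt p.1 p.2

theorem pt_mem_seedSet {i j : ℤ} (h : 0 ≤ i ∧ i < m ∧ 0 ≤ j ∧ j < n ∧ IsSeed i j) :
    pt i j ∈ seedSet m n := by
  obtain ⟨hi0, hi, hj0, hj, hseed⟩ := h
  lift i to ℕ using hi0
  lift j to ℕ using hj0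
  exact mem_image.2 ⟨(i, j), mem_filter.2 ⟨mem_product.2 ⟨mem_range.2 (by omega),
    mem_range.2 (by omega)⟩, hseed⟩, rfl⟩

theorem card_seedSet_le : #(seedSet m n) ≤ (n + 2) / 3 * (m + 1) := by
  set f : ℕ → ℕ := fun r => #{i ∈ range m | IsSeed (i : ℕ) r}
  have hcol (j : ℕ) : #{i ∈ range m | IsSeed (i : ℕ) j} = f (j % 3) :=
    congrArg card (filter_congr fun i _ => by omega)
  have hf : f 0 + f 1 + f 2 ≤ m + 1 := by
    have hparity : f 0 + f 1 = m := by
      rw [← card_range m, ← card_filter_add_card_filter_not (fun i : ℕ => (i : ℤ) % 2 = 0)]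
      congr 1 <;> exact congrArg card (filter_congr fun i _ => by omega)
    have hrow : f 2 ≤ 1 := card_le_one.2 fun a ha b hb => by simp at ha hb; omega
    omega
  calc #(seedSet m n)
      ≤ #{p ∈ range m ×ˢ range n | IsSeed p.1 p.2} := card_image_le
    _ = ∑ j ∈ range n, f (j % 3) := by
      rw [card_filter, sum_product_right]
      exact sum_congr rfl fun j _ => by rw [← hcol, card_filter]
    _ ≤ (n + 2) / 3 * (f 0 + f 1 + f 2) := sum_range_mod_three_le f n
    _ ≤ (n + 2) / 3 * (m + 1) := Nat.mul_le_mul_left _ hf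

end SeedSet

section Percolation

variable {m n : ℕ} [NeZero m] [NeZero n]

local notation "Act" =>
  Activated (toroidalMesh m n) (fun _ => 3) (seedSet m n : Set (ZMod m × ZMod n))

theorem activated_pt_of_isSeed {i j : ℤ} (h : 0 ≤ i ∧ i < m ∧ 0 ≤ j ∧ j < n ∧ IsSeed i j) :
    Act (pt i j) :=
  .base (pt_mem_seedSet h)

variable (hm : 3 ≤ m) (hn : 3 ≤ n)
include hm hn

theorem activated_pt_of_forall_adj_ne {i j : ℤ} (x : ZMod m × ZMod n)
    (h : ∀ u, (toroidalMesh m n).Adj u (pt i j) → u ≠ x → Act u) : Act (pt i j) := by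
  classical
  exact .of_forall_adj_ne x (by rw [degree_toroidalMesh hm hn]; norm_num) h

theorem activated_col_one_zero {j : ℤ} (hj : 0 ≤ j ∧ j < n ∧ j % 3 = 1) : Act (pt 0 j) := by
  refine activated_pt_of_forall_adj_ne hm hn (pt (0 - 1) j) fun u hu hne => ?_
  rcases eq_pt_of_adj_pt hu with rfl | rfl | rfl | rfl
  · exact activated_pt_of_isSeed (by omega)
  · exact absurd rfl hne
  · rcases (by omega : j + 1 < n ∨ j + 1 = n) with h | h
    · exact activated_pt_of_isSeed (by omega)
    · rw [h, pt_natCast_right]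
      exact activated_pt_of_isSeed (by omega)
  · exact activated_pt_of_isSeed (by omega)

theorem activated_col_one {i j : ℤ} (hi : 0 ≤ i ∧ i < m) (hj : 0 ≤ j ∧ j < n ∧ j % 3 = 1) :
    Act (pt i j) := by
  by_cases hodd : i % 2 = 1
  · exact activated_pt_of_isSeed (by omega)
  obtain rfl | hi0 := eq_or_ne i 0
  · exact activated_col_one_zero hm hn hj
  refine activated_pt_of_forall_adj_ne hm hn (pt i (j + 1)) fun u hu hne => ?_
  rcases eq_pt_of_adj_pt hu with rfl | rfl | rfl | rfl
  · rcases (by omega : i + 1 < m ∨ i + 1 = m) with h | h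
    · exact activated_pt_of_isSeed (by omega)
    · rw [h, pt_natCast_left]
      exact activated_col_one_zero hm hn hj
  · exact activated_pt_of_isSeed (by omega)
  · exact absurd rfl hne
  · exact activated_pt_of_isSeed (by omega)

theorem activated_col_zero_of_right {i j : ℤ} (hi : 0 ≤ i ∧ i < m)
    (hj : 0 ≤ j ∧ j < n ∧ j % 3 = 0) (hright : Act (pt i (j + 1))) : Act (pt i j) := by
  by_cases heven : i % 2 = 0
  · exact activated_pt_of_isSeed (by omega)
  refine activated_pt_of_forall_adj_ne hm hn (pt i (j - 1)) fun u hu hne => ?_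
  rcases eq_pt_of_adj_pt hu with rfl | rfl | rfl | rfl
  · rcases (by omega : i + 1 < m ∨ i + 1 = m) with h | h
    · exact activated_pt_of_isSeed (by omega)
    · rw [h, pt_natCast_left]
      exact activated_pt_of_isSeed (by omega)
  · exact activated_pt_of_isSeed (by omega)
  · exact hright
  · exact absurd rfl hne

theorem activated_col_zero {i j : ℤ} (hi : 0 ≤ i ∧ i < m) (hj : 0 ≤ j ∧ j < n ∧ j % 3 = 0) :
    Act (pt i j) := by
  refine activated_col_zero_of_right hm hn hi hj ?_
  rcases (by omega : j + 1 < n ∨ j + 1 = n) with h | h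
  · exact activated_col_one hm hn hi (by omega)
  · -- when `n ≡ 1 (mod 3)` the last column `j ≡ 0` is followed by column `0`, also `≡ 0`
    rw [h, pt_natCast_right]
    exact activated_col_zero_of_right hm hn hi (by omega) (activated_col_one hm hn hi (by omega))

theorem activated_col_two {i j : ℤ} (hi : 0 ≤ i ∧ i < m) (hj : 0 ≤ j ∧ j < n ∧ j % 3 = 2) :
    Act (pt i j) := by
  obtain ⟨hi0, hi⟩ := hi
  lift i to ℕ using hi0
  induction i with
  | zero => exact activated_pt_of_isSeed (by omega)
  | succ k ih =>
    push_cast at hi ⊢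
    refine activated_pt_of_forall_adj_ne hm hn (pt (k + 1 + 1) j) fun u hu hne => ?_
    rcases eq_pt_of_adj_pt hu with rfl | rfl | rfl | rfl
    · exact absurd rfl hne
    · simpa using ih (by omega)
    · rcases (by omega : j + 1 < n ∨ j + 1 = n) with h | h
      · exact activated_col_zero hm hn (by omega) (by omega)
      · rw [h, pt_natCast_right]
        exact activated_col_zero hm hn (by omega) (by omega)
    · exact activated_col_one hm hn (by omega) (by omega)

theorem activated_seedSet (v : ZMod m × ZMod n) : Act v := by
  have hv : pt (v.1.val : ℤ) (v.2.val : ℤ) = v := by simp [pt]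
  have hi : 0 ≤ (v.1.val : ℤ) ∧ (v.1.val : ℤ) < m := by have := v.1.val_lt; omega
  have hj := v.2.val_lt
  rw [← hv]
  rcases (by omega : (v.2.val : ℤ) % 3 = 0 ∨ (v.2.val : ℤ) % 3 = 1 ∨ (v.2.val : ℤ) % 3 = 2)
    with h | h | h
  · exact activated_col_zero hm hn hi (by omega)
  · exact activated_col_one hm hn hi (by omega)
  · exact activated_col_two hm hn hi (by omega)

theorem minSeed_toroidalMesh_le :
    minSeed (toroidalMesh m n) (fun _ => 3) ≤ (n + 2) / 3 * (m + 1) :=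
  (minSeed_le_card _ (activated_seedSet hm hn)).trans card_seedSet_le

end Percolation

/-- For `m, n ≥ 3`,
`⌈(mn+1)/3⌉ ≤ min-seed(C_m □ C_n, 3) ≤ min{⌈m/3⌉(n+1), ⌈n/3⌉(m+1)}`. -/
theorem minSeed_toroidalMesh_bounds (m n : ℕ) [NeZero m] [NeZero n]
    (hm : 3 ≤ m) (hn : 3 ≤ n) :
    (m * n + 3) / 3 ≤ minSeed (toroidalMesh m n) (fun _ => 3) ∧
    minSeed (toroidalMesh m n) (fun _ => 3) ≤
      min ((m + 2) / 3 * (n + 1)) ((n + 2) / 3 * (m + 1)) := by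
  refine ⟨le_minSeed fun S hS => le_card_of_forall_activated_toroidalMesh hm hn hS,
    le_min ?_ (minSeed_toroidalMesh_le hm hn)⟩
  rw [minSeed_toroidalMesh_comm]
  exact minSeed_toroidalMesh_le hn hm
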